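/- arXiv:1704.02767 — 9 statements merged into one kernel-verified Lean document; each statement's English description precedes it below -/
import Mathlib

section
/- Let H = (V, E) be a finite hypergraph of maximum degree at most Δ (Δ ≥ 1). Then there exists a fractional matching x of H such that 1/Δ ≤ x_e ≤ 1 for every hyperedge e ∈ E, and every hyperedge e ∈ E contains at least one vertex that is half-tight with respect to x. -/
open Finset

/-- In a finite hypergraph of maximum degree at most `Δ ≥ 1`, there is a
fractional matching `x` with `1/Δ ≤ x_e ≤ 1` for every hyperedge and such that every
hyperedge contains a half-tight vertex. -/
theorem hypergraph_greedy_fractional_matching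
    {V : Type*} [Fintype V] [DecidableEq V]
    (E : Finset (Finset V)) (Δ : ℕ) (hΔ : 1 ≤ Δ)
    (hne : ∀ e ∈ E, e.Nonempty)
    (hdeg : ∀ v : V, (E.filter (fun e => v ∈ e)).card ≤ Δ) :
    ∃ x : Finset V → ℝ,
      (∀ e ∈ E, 1 / (Δ : ℝ) ≤ x e ∧ x e ≤ 1) ∧
      (∀ v : V, ∑ e ∈ E.filter (fun e => v ∈ e), x e ≤ 1) ∧
      (∀ e ∈ E, ∃ v ∈ e, (1 : ℝ) / 2 ≤ ∑ f ∈ E.filter (fun f => v ∈ f), x f) := by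
  have hΔpos : (0:ℝ) < Δ := by positivity
  have hΔ1 : (1:ℝ) ≤ Δ := by exact_mod_cast hΔ
  have hinv1 : 1 / (Δ:ℝ) ≤ 1 := by
    rw [div_le_one hΔpos]; exact hΔ1
  have hinvpos : (0:ℝ) < 1 / Δ := by positivity
  suffices h : ∀ F : Finset (Finset V), F ⊆ E →
      ∃ x : Finset V → ℝ,
      (∀ e ∈ E, 1 / (Δ : ℝ) ≤ x e ∧ x e ≤ 1) ∧
      (∀ v : V, ∑ e ∈ E.filter (fun e => v ∈ e), x e ≤ 1) ∧
      (∀ e ∈ F, ∃ v ∈ e, (1 : ℝ) / 2 ≤ ∑ f ∈ E.filter (fun f => v ∈ f), x f) by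
    exact h E le_rfl
  intro F
  induction F using Finset.induction_on with
  | empty =>
    intro _
    refine ⟨fun _ => 1 / Δ, fun e _ => ⟨le_rfl, hinv1⟩, ?_, by simp⟩
    intro v
    calc ∑ e ∈ E.filter (fun e => v ∈ e), (1:ℝ)/Δ
        = (E.filter (fun e => v ∈ e)).card * (1/Δ) := by
          rw [Finset.sum_const, nsmul_eq_mul]
      _ ≤ Δ * (1/Δ) := by
          apply mul_le_mul_of_nonneg_right _ (le_of_lt hinvpos)
          exact_mod_cast hdeg v
      _ = 1 := by field_simp
  | @insert e F heF ih =>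
    intro hsub
    have heE : e ∈ E := hsub (Finset.mem_insert_self e F)
    have hFE : F ⊆ E := fun f hf => hsub (Finset.mem_insert_of_mem hf)
    obtain ⟨x, hbd, hvc, hht⟩ := ih hFE
    -- nonnegativity of x on edges of E
    have hnn : ∀ f ∈ E, (0:ℝ) ≤ x f := fun f hf =>
      le_trans (le_of_lt hinvpos) (hbd f hf).1
    by_cases hgood : ∃ v ∈ e, (1:ℝ)/2 ≤ ∑ f ∈ E.filter (fun f => v ∈ f), x f
    · refine ⟨x, hbd, hvc, ?_⟩
      intro f hf
      rcases Finset.mem_insert.mp hf with rfl | hf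
      · exact hgood
      · exact hht f hf
    push_neg at hgood
    -- bump edge e
    set b : ℝ := min 1 (x e + 1/2) with hb
    set x' : Finset V → ℝ := Function.update x e b with hx'
    have hxe := hbd e heE
    have hble : x e ≤ b := le_min hxe.2 (by linarith)
    have hmono : ∀ f, x f ≤ x' f := by
      intro f
      by_cases hfe : f = e
      · subst hfe; simpa [hx'] using hble
      · simp [hx', Function.update_of_ne hfe]
    have hsum_mono : ∀ v : V, ∑ f ∈ E.filter (fun f => v ∈ f), x f ≤
        ∑ f ∈ E.filter (fun f => v ∈ f), x' f :=
      fun v => Finset.sum_le_sum fun f _ => hmono f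
    -- sum formula at vertices of e
    have hsum_eq : ∀ v ∈ e, ∑ f ∈ E.filter (fun f => v ∈ f), x' f =
        ∑ f ∈ E.filter (fun f => v ∈ f), x f + (b - x e) := by
      intro v hv
      have hmem : e ∈ E.filter (fun f => v ∈ f) := Finset.mem_filter.mpr ⟨heE, hv⟩
      rw [hx', Finset.sum_update_of_mem hmem,
        ← Finset.add_sum_erase _ x hmem, Finset.sdiff_singleton_eq_erase]
      ring
    refine ⟨x', ?_, ?_, ?_⟩
    · intro f hf
      by_cases hfe : f = e
      · subst hfe
        simp only [hx', Function.update_self]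
        exact ⟨le_trans hxe.1 hble, min_le_left _ _⟩
      · simpa [hx', Function.update_of_ne hfe] using hbd f hf
    · intro v
      by_cases hv : v ∈ e
      · rw [hsum_eq v hv]
        have h1 := hgood v hv
        have h2 : b - x e ≤ 1/2 := by
          have := min_le_right 1 (x e + 1/2); linarith
        linarith
      · have : ∑ f ∈ E.filter (fun f => v ∈ f), x' f =
            ∑ f ∈ E.filter (fun f => v ∈ f), x f := by
          apply Finset.sum_congr rfl
          intro f hf
          have : f ≠ e := by
            rintro rfl
            exact hv (Finset.mem_filter.mp hf).2
          simp [hx', Function.update_of_ne this]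
        rw [this]; exact hvc v
    · intro f hf
      rcases Finset.mem_insert.mp hf with rfl | hf
      · -- f = e : pick any vertex of e
        obtain ⟨v, hv⟩ := hne f heE
        refine ⟨v, hv, ?_⟩
        rw [hsum_eq v hv]
        rcases min_cases 1 (x f + 1/2) with ⟨h1, _⟩ | ⟨h1, h2⟩
        · -- b = 1
          have hmem : f ∈ E.filter (fun g => v ∈ g) := Finset.mem_filter.mpr ⟨heE, hv⟩
          have hxle : x f ≤ ∑ g ∈ E.filter (fun g => v ∈ g), x g := by
            apply Finset.single_le_sum (fun g hg => hnn g (Finset.mem_filter.mp hg).1) hmem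
          rw [hb, h1]; linarith
        · -- b = x e + 1/2
          have hnneg : (0:ℝ) ≤ ∑ g ∈ E.filter (fun g => v ∈ g), x g :=
            Finset.sum_nonneg fun g hg => hnn g (Finset.mem_filter.mp hg).1
          rw [hb, h1]; linarith
      · obtain ⟨v, hv, hhv⟩ := hht f hf
        exact ⟨v, hv, le_trans hhv (hsum_mono v)⟩
end

section
/- Let H = (V, E) be a finite hypergraph of rank at most r (r ≥ 1), let d ≥ 1 and 1 ≤ L ≤ d be reals, and let x be a fractional matching of H such that for every hyperedge e, either x_e = 0 or x_e ≥ 1/d. Then there exists a fractional matching y of H such that for every hyperedge e, either y_e = 0 or y_e ≥ L/d, such that y_e > 0 only if x_e > 0, and such that Σ_{e ∈ E} y_e ≥ (1/(2r)) · Σ_{e ∈ E} x_e. -/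
open Finset

/-- (Basic rounding, existential form.) In a finite hypergraph of rank at
most `r`, given reals `1 ≤ L ≤ d` and a fractional matching `x` with every nonzero value
at least `1/d`, there exists a fractional matching `y` with every nonzero value at least
`L/d`, supported on the support of `x`, of total size at least `(1/(2r)) · Σ_e x_e`. -/
theorem hypergraph_basic_rounding
    {V : Type*} [Fintype V] [DecidableEq V]
    (E : Finset (Finset V)) (r : ℕ) (hr : 1 ≤ r)
    (hne : ∀ e ∈ E, e.Nonempty)
    (hrank : ∀ e ∈ E, e.card ≤ r)
    (d L : ℝ) (hd : 1 ≤ d) (hL : 1 ≤ L) (hLd : L ≤ d)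
    (x : Finset V → ℝ)
    (hx01 : ∀ e ∈ E, 0 ≤ x e ∧ x e ≤ 1)
    (hxfrac : ∀ v : V, ∑ e ∈ E.filter (fun e => v ∈ e), x e ≤ 1)
    (hxd : ∀ e ∈ E, x e = 0 ∨ 1 / d ≤ x e) :
    ∃ y : Finset V → ℝ,
      (∀ e ∈ E, 0 ≤ y e ∧ y e ≤ 1) ∧
      (∀ v : V, ∑ e ∈ E.filter (fun e => v ∈ e), y e ≤ 1) ∧
      (∀ e ∈ E, y e = 0 ∨ L / d ≤ y e) ∧
      (∀ e ∈ E, 0 < y e → 0 < x e) ∧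
      (1 / (2 * r)) * ∑ e ∈ E, x e ≤ ∑ e ∈ E, y e := by
  classical
  have hd0 : (0:ℝ) < d := lt_of_lt_of_le one_pos hd
  set supp := E.filter (fun e => 0 < x e) with hsupp
  have hsuppE : supp ⊆ E := filter_subset _ _
  -- collection of matchings inside supp
  set Mcoll := supp.powerset.filter
      (fun M => ∀ a ∈ M, ∀ b ∈ M, a ≠ b → Disjoint a b) with hMcoll
  have hempty : (∅ : Finset (Finset V)) ∈ Mcoll := by simp [hMcoll]
  obtain ⟨M, hMmem, hMmax⟩ := Mcoll.exists_max_image card ⟨∅, hempty⟩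
  rw [hMcoll, mem_filter, mem_powerset] at hMmem
  obtain ⟨hMsupp, hMdisj⟩ := hMmem
  have hME : M ⊆ E := hMsupp.trans hsuppE
  -- maximality: every support edge meets some edge of M
  have hmax : ∀ e ∈ supp, ∃ f ∈ M, ¬ Disjoint e f := by
    intro e he
    by_contra hcon
    push_neg at hcon
    have heM : e ∉ M := by
      intro heM
      exact (hne e (hsuppE he)).ne_empty (disjoint_self.mp (hcon e heM))
    have hins : insert e M ∈ Mcoll := by
      rw [hMcoll, mem_filter, mem_powerset]
      constructor
      · exact insert_subset he hMsupp
      · intro a ha b hb hab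
        rcases mem_insert.mp ha with ha' | ha'
        · rcases mem_insert.mp hb with hb' | hb'
          · exact absurd (ha'.trans hb'.symm) hab
          · exact ha' ▸ hcon b hb'
        · rcases mem_insert.mp hb with hb' | hb'
          · exact hb' ▸ (hcon a ha').symm
          · exact hMdisj a ha' b hb' hab
    have := hMmax _ hins
    rw [card_insert_of_notMem heM] at this
    omega
  -- define y as the indicator of M
  refine ⟨fun e => if e ∈ M then 1 else 0, ?_, ?_, ?_, ?_, ?_⟩
  · intro e _; by_cases h : e ∈ M <;> simp [h]
  · intro v
    rw [Finset.sum_ite_mem]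
    have hcard : ((E.filter (fun e => v ∈ e)) ∩ M).card ≤ 1 := by
      apply card_le_one.mpr
      intro a ha b hb
      rw [mem_inter, mem_filter] at ha hb
      by_contra hab
      exact (Finset.disjoint_left.mp (hMdisj a ha.2 b hb.2 hab)) ha.1.2 hb.1.2
    calc ∑ _e ∈ (E.filter (fun e => v ∈ e)) ∩ M, (1:ℝ)
        = ((E.filter (fun e => v ∈ e)) ∩ M).card := by simp
      _ ≤ 1 := by exact_mod_cast hcard
  · intro e _
    by_cases h : e ∈ M
    · right; simp [h]; exact div_le_one_of_le₀ hLd hd0.le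
    · left; simp [h]
  · intro e _ hy
    by_cases h : e ∈ M
    · exact (mem_filter.mp (hMsupp h)).2
    · simp [h] at hy
  · -- size bound
    have hsumy : ∑ e ∈ E, (if e ∈ M then (1:ℝ) else 0) = M.card := by
      rw [Finset.sum_ite_mem]
      rw [inter_eq_right.mpr hME]
      simp
    have hsumx : ∑ e ∈ E, x e = ∑ e ∈ supp, x e := by
      apply (Finset.sum_subset hsuppE ?_).symm
      intro e heE hesupp
      rcases hxd e heE with h0 | h1
      · exact h0
      · exfalso; exact hesupp (mem_filter.mpr ⟨heE, lt_of_lt_of_le (by positivity) h1⟩)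
    set U := M.biUnion id with hU
    have hstep : ∑ e ∈ supp, x e ≤ (U.card : ℝ) := by
      have h1 : ∀ e ∈ supp, x e ≤ ∑ v ∈ U, (if v ∈ e then x e else 0) := by
        intro e he
        obtain ⟨f, hf, hnd⟩ := hmax e he
        rw [Finset.not_disjoint_iff] at hnd
        obtain ⟨v, hve, hvf⟩ := hnd
        have hvU : v ∈ U := mem_biUnion.mpr ⟨f, hf, hvf⟩
        have := Finset.single_le_sum (f := fun v => if v ∈ e then x e else 0)
          (fun w _ => by by_cases h : w ∈ e <;>
            simp [h, (mem_filter.mp he).2.le]) hvU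
        simpa [hve] using this
      calc ∑ e ∈ supp, x e ≤ ∑ e ∈ supp, ∑ v ∈ U, (if v ∈ e then x e else 0) :=
            Finset.sum_le_sum h1
        _ = ∑ v ∈ U, ∑ e ∈ supp, (if v ∈ e then x e else 0) := Finset.sum_comm
        _ ≤ ∑ _v ∈ U, (1:ℝ) := by
            apply Finset.sum_le_sum
            intro v _
            rw [← Finset.sum_filter]
            calc ∑ e ∈ supp.filter (fun e => v ∈ e), x e
                ≤ ∑ e ∈ E.filter (fun e => v ∈ e), x e := by
                  apply Finset.sum_le_sum_of_subset_of_nonneg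
                  · exact filter_subset_filter _ hsuppE
                  · intro e he _; exact (hx01 e (mem_filter.mp he).1).1
              _ ≤ 1 := hxfrac v
        _ = (U.card : ℝ) := by simp
    have hUcard : U.card ≤ r * M.card := by
      calc U.card ≤ ∑ f ∈ M, f.card := card_biUnion_le
        _ ≤ ∑ _f ∈ M, r := Finset.sum_le_sum (fun f hf => hrank f (hME hf))
        _ = r * M.card := by rw [Finset.sum_const]; ring
    have hS : ∑ e ∈ E, x e ≤ (r : ℝ) * M.card := by
      rw [hsumx]
      calc ∑ e ∈ supp, x e ≤ (U.card : ℝ) := hstep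
        _ ≤ (r : ℝ) * M.card := by exact_mod_cast hUcard
    show (1/(2*(r:ℝ))) * ∑ e ∈ E, x e ≤ ∑ e ∈ E, (if e ∈ M then (1:ℝ) else 0)
    rw [hsumy]
    have hr0 : (0:ℝ) < r := by exact_mod_cast hr
    rw [div_mul_eq_mul_div, one_mul, div_le_iff₀ (by positivity)]
    nlinarith [Nat.cast_nonneg (α := ℝ) M.card]
end

section
/- Let G = (V, E) be a finite simple graph of neighborhood independence at most r (r ≥ 1), and let I be a maximal independent set of G, i.e., an independent set such that every vertex of V is in I or has a neighbor in I. Then every independent set S of G satisfies |S| ≤ r · |I|. -/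
open Finset

/-- In a finite simple graph of neighborhood independence at most `r`,
if `I` is a maximal independent set, then every independent set `S` satisfies
`|S| ≤ r · |I|`. -/
theorem maximal_independent_set_approx
    {V : Type*} [Fintype V] [DecidableEq V]
    (G : SimpleGraph V) [DecidableRel G.Adj]
    (r : ℕ) (hr : 1 ≤ r)
    (hni : ∀ v : V, ∀ S : Finset V, (∀ u ∈ S, G.Adj v u) →
      (∀ u ∈ S, ∀ w ∈ S, u ≠ w → ¬ G.Adj u w) → S.card ≤ r)
    (I : Finset V)
    (hIind : ∀ u ∈ I, ∀ w ∈ I, u ≠ w → ¬ G.Adj u w)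
    (hImax : ∀ v : V, v ∈ I ∨ ∃ u ∈ I, G.Adj v u)
    (S : Finset V)
    (hSind : ∀ u ∈ S, ∀ w ∈ S, u ≠ w → ¬ G.Adj u w) :
    S.card ≤ r * I.card := by
  classical
  have hf : ∀ s : V, ∃ v, v ∈ I ∧ (s = v ∨ G.Adj s v) := by
    intro s
    rcases hImax s with h | ⟨u, hu, ha⟩
    · exact ⟨s, h, Or.inl rfl⟩
    · exact ⟨u, hu, Or.inr ha⟩
  choose f hfI hfd using hf
  have key : ∀ v ∈ I, (S.filter (fun s => f s = v)).card ≤ r := by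
    intro v hv
    by_cases hvS : v ∈ S ∧ f v = v
    · have hsub : S.filter (fun s => f s = v) ⊆ {v} := by
        intro u hu
        simp only [mem_filter] at hu
        rcases hfd u with h | h
        · simp [h.trans hu.2]
        · rw [hu.2] at h
          by_contra hne
          simp only [mem_singleton] at hne
          exact hSind u hu.1 v hvS.1 hne h
      calc (S.filter (fun s => f s = v)).card ≤ ({v} : Finset V).card :=
            card_le_card hsub
        _ = 1 := card_singleton v
        _ ≤ r := hr
    · apply hni v
      · intro u hu
        simp only [mem_filter] at hu
        rcases hfd u with h | h
        · exact absurd ⟨h.trans hu.2 ▸ hu.1, h.trans hu.2 ▸ hu.2⟩ hvS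
        · rw [hu.2] at h
          exact h.symm
      · intro u hu w hw hne
        simp only [mem_filter] at hu hw
        exact hSind u hu.1 w hw.1 hne
  calc S.card = ∑ v ∈ I, (S.filter (fun s => f s = v)).card :=
        card_eq_sum_card_fiberwise (fun s _ => hfI s)
    _ ≤ ∑ _v ∈ I, r := sum_le_sum key
    _ = I.card * r := by rw [sum_const, smul_eq_mul]
    _ = r * I.card := mul_comm _ _
end

section
/- Let G = (V, E) be a finite simple graph of neighborhood independence at most r (r ≥ 1) and let x be a greedy packing of G. Then for every vertex v ∈ V, Σ_x(v) = Σ_{u ∈ N⁺(v)} x_u ≤ r. -/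
open Finset
open Classical

/-- A greedy packing of a finite simple graph `G`: a nonnegative vertex vector `x` for
which there is a (strict) linear order `p` on the vertices such that for every vertex `v`,
`x v` plus the sum of `x u` over neighbors `u` of `v` preceding `v` is at most `1`. -/
def IsGreedyPacking {V : Type*} [Fintype V] (G : SimpleGraph V) [DecidableRel G.Adj]
    (x : V → ℝ) : Prop :=
  (∀ v : V, 0 ≤ x v) ∧
  ∃ p : V → V → Prop, IsStrictTotalOrder V p ∧
    ∀ v : V, x v + ∑ u ∈ G.neighborFinset v, (if p u v then x u else 0) ≤ 1

/-- In a nonempty finite set there is a `p`-maximal element. -/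
lemma exists_pmax {V : Type*} [DecidableEq V] (p : V → V → Prop) [IsStrictTotalOrder V p]
    (T : Finset V) (hT : T.Nonempty) :
    ∃ m ∈ T, ∀ u ∈ T, u ≠ m → p u m := by
  classical
  induction T using Finset.induction_on with
  | empty => exact absurd hT (by simp)
  | @insert a s ha ih =>
    rcases s.eq_empty_or_nonempty with hs | hs
    · subst hs
      exact ⟨a, by simp, by simp⟩
    · obtain ⟨m, hmS, hmax⟩ := ih hs
      rcases trichotomous_of p a m with h | h | h
      · refine ⟨m, Finset.mem_insert_of_mem hmS, ?_⟩
        intro u hu hne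
        rcases Finset.mem_insert.mp hu with rfl | hu
        · exact h
        · exact hmax u hu hne
      · exact absurd (h ▸ hmS) ha
      · refine ⟨a, Finset.mem_insert_self a s, ?_⟩
        intro u hu hne
        rcases Finset.mem_insert.mp hu with rfl | hu
        · exact absurd rfl hne
        · by_cases hum : u = m
          · exact hum ▸ h
          · exact _root_.trans (hmax u hu hum) h

/-- Greedy-from-the-top construction of an independent set dominating `T` from above. -/
lemma cover_lemma {V : Type*} [Fintype V] [DecidableEq V]
    (G : SimpleGraph V) [DecidableRel G.Adj]
    (p : V → V → Prop) [IsStrictTotalOrder V p] (T : Finset V) :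
    ∃ S : Finset V, S ⊆ T ∧
      (∀ a ∈ S, ∀ b ∈ S, a ≠ b → ¬ G.Adj a b) ∧
      ∀ u ∈ T, ∃ s ∈ S, u = s ∨ (G.Adj s u ∧ p u s) := by
  classical
  induction T using Finset.strongInduction with
  | _ T ih =>
    rcases T.eq_empty_or_nonempty with h | h
    · exact ⟨∅, by simp [h]⟩
    · obtain ⟨m, hmT, hmax⟩ := exists_pmax p T h
      have hlt : T \ insert m (G.neighborFinset m) ⊂ T := by
        refine Finset.ssubset_iff_of_subset Finset.sdiff_subset |>.mpr ?_
        exact ⟨m, hmT, by simp⟩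
      obtain ⟨S', hS'sub, hS'ind, hS'cov⟩ := ih _ hlt
      have hS'T' : ∀ s ∈ S', s ∉ insert m (G.neighborFinset m) :=
        fun s hs => (Finset.mem_sdiff.mp (hS'sub hs)).2
      refine ⟨insert m S', ?_, ?_, ?_⟩
      · exact Finset.insert_subset hmT (hS'sub.trans Finset.sdiff_subset)
      · have key : ∀ s ∈ S', ¬ G.Adj m s ∧ s ≠ m := by
          intro s hs
          have := hS'T' s hs
          simp only [Finset.mem_insert, SimpleGraph.mem_neighborFinset] at this
          push_neg at this
          exact ⟨this.2, this.1⟩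
        intro a ha b hb hne
        rcases Finset.mem_insert.mp ha with ha1 | ha1
        · rcases Finset.mem_insert.mp hb with hb1 | hb1
          · exact absurd (ha1.trans hb1.symm) hne
          · exact fun hadj => (key b hb1).1 (ha1 ▸ hadj)
        · rcases Finset.mem_insert.mp hb with hb1 | hb1
          · exact fun hadj => (key a ha1).1 (hb1 ▸ hadj.symm)
          · exact hS'ind a ha1 b hb1 hne
      · intro u hu
        by_cases hum : u ∈ insert m (G.neighborFinset m)
        · rcases Finset.mem_insert.mp hum with hum1 | hum1
          · exact ⟨m, Finset.mem_insert_self _ _, Or.inl hum1⟩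
          · have hadj : G.Adj m u := (SimpleGraph.mem_neighborFinset _ _ _).mp hum1
            exact ⟨m, Finset.mem_insert_self _ _,
              Or.inr ⟨hadj, hmax u hu hadj.ne'⟩⟩
        · obtain ⟨s, hs, hspec⟩ := hS'cov u (Finset.mem_sdiff.mpr ⟨hu, hum⟩)
          exact ⟨s, Finset.mem_insert_of_mem hs, hspec⟩

/-- In a finite simple graph of neighborhood independence at most `r`,
every greedy packing `x` satisfies `Σ_x(v) = Σ_{u ∈ N⁺(v)} x_u ≤ r` for every vertex. -/
theorem greedyPacking_local_sum_le
    {V : Type*} [Fintype V] [DecidableEq V]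
    (G : SimpleGraph V) [DecidableRel G.Adj]
    (r : ℕ) (hr : 1 ≤ r)
    (hni : ∀ v : V, ∀ S : Finset V, (∀ u ∈ S, G.Adj v u) →
      (∀ u ∈ S, ∀ w ∈ S, u ≠ w → ¬ G.Adj u w) → S.card ≤ r)
    (x : V → ℝ) (hx : IsGreedyPacking G x) :
    ∀ v : V, x v + ∑ u ∈ G.neighborFinset v, x u ≤ (r : ℝ) := by
  obtain ⟨hx0, p, hp, hps⟩ := hx
  haveI := hp
  intro v
  set T : Finset V := insert v (G.neighborFinset v) with hTdef
  obtain ⟨S, hSsub, hSind, hScov⟩ := cover_lemma G p T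
  -- cardinality bound on `S`
  have hScard : (S.card : ℝ) ≤ (r : ℝ) := by
    by_cases hvS : v ∈ S
    · have hSsing : S = {v} := by
        apply Finset.eq_singleton_iff_unique_mem.mpr
        refine ⟨hvS, ?_⟩
        intro s hs
        by_contra hne
        have hadj : G.Adj v s := by
          rcases Finset.mem_insert.mp (hSsub hs) with h | h
          · exact absurd h hne
          · exact (SimpleGraph.mem_neighborFinset _ _ _).mp h
        exact hSind v hvS s hs (fun h => hne h.symm) hadj
      rw [hSsing]
      simpa using (by exact_mod_cast hr : (1 : ℝ) ≤ (r : ℝ))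
    · have hadj : ∀ s ∈ S, G.Adj v s := by
        intro s hs
        rcases Finset.mem_insert.mp (hSsub hs) with h | h
        · exact absurd (h ▸ hs) hvS
        · exact (SimpleGraph.mem_neighborFinset _ _ _).mp h
      exact_mod_cast hni v S hadj hSind
  have hvnot : v ∉ G.neighborFinset v := by simp
  rw [← Finset.sum_insert hvnot, ← hTdef]
  -- the assignment of each vertex to a covering element of `S`
  set f : V → V := fun u =>
    if h : ∃ s ∈ S, u = s ∨ (G.Adj s u ∧ p u s) then h.choose else u with hfdef
  have hf : ∀ u ∈ T, f u ∈ S ∧ (u = f u ∨ (G.Adj (f u) u ∧ p u (f u))) := by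
    intro u hu
    have h := hScov u hu
    simp only [hfdef, dif_pos h]
    exact ⟨h.choose_spec.1, h.choose_spec.2⟩
  calc ∑ u ∈ T, x u
      = ∑ s ∈ S, ∑ u ∈ T.filter (fun u => f u = s), x u :=
        (Finset.sum_fiberwise_of_maps_to (fun u hu => (hf u hu).1) x).symm
    _ ≤ ∑ s ∈ S, 1 := by
        refine Finset.sum_le_sum ?_
        intro s hs
        have hsub : T.filter (fun u => f u = s) ⊆
            insert s ((G.neighborFinset s).filter (fun u => p u s)) := by
          intro u hu
          obtain ⟨huT, hfu⟩ := Finset.mem_filter.mp hu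
          rcases (hf u huT).2 with h | h
          · exact Finset.mem_insert.mpr (Or.inl (h.trans hfu))
          · refine Finset.mem_insert.mpr (Or.inr ?_)
            rw [hfu] at h
            exact Finset.mem_filter.mpr
              ⟨(SimpleGraph.mem_neighborFinset _ _ _).mpr h.1, h.2⟩
        have h1 : ∑ u ∈ T.filter (fun u => f u = s), x u ≤
            ∑ u ∈ insert s ((G.neighborFinset s).filter (fun u => p u s)), x u :=
          Finset.sum_le_sum_of_subset_of_nonneg hsub (fun u _ _ => hx0 u)
        have hsnot : s ∉ (G.neighborFinset s).filter (fun u => p u s) := by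
          simp
        have h2 : ∑ u ∈ insert s ((G.neighborFinset s).filter (fun u => p u s)), x u
            = x s + ∑ u ∈ G.neighborFinset s, (if p u s then x u else 0) := by
          rw [Finset.sum_insert hsnot, Finset.sum_filter]
        exact h1.trans (h2 ▸ hps s)
    _ = (S.card : ℝ) := by simp
    _ ≤ (r : ℝ) := hScard
end

section
/- Let G = (V, E) be a finite simple graph, let x be a greedy packing of G, and let v ∈ V be a vertex with Σ_x(v) ≤ 1. Let y : V → ℝ≥0 satisfy y_u = x_u for all u ≠ v and y_v ≤ x_v + 1 − Σ_x(v). Then y is also a greedy packing of G. -/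
/-!
Move `v` to the end of a greedy order for `x`. Every other vertex then loses `v` from its
predecessors, so its constraint for `y` is bounded by its constraint for `x`; and every neighbour
of `v` now precedes it, so the constraint at `v` reads `y v + Σ_{u ∈ N(v)} x u ≤ 1`, which is the
bound on `y v`.
-/

open Finset
open Classical

def moveLast {V : Type*} (p : V → V → Prop) (v : V) (a b : V) : Prop :=
  a ≠ v ∧ (b = v ∨ p a b)

theorem isStrictTotalOrder_moveLast {V : Type*} {p : V → V → Prop} (hp : IsStrictTotalOrder V p)
    (v : V) : IsStrictTotalOrder V (moveLast p v) where
  irrefl a := fun ⟨hav, h⟩ => h.elim hav (hp.irrefl a)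
  trans a b c := fun ⟨hav, hab⟩ ⟨hbv, hbc⟩ =>
    ⟨hav, hbc.imp_right (hp.trans a b c (hab.resolve_left hbv))⟩
  trichotomous a b hab hba := by
    by_cases hav : a = v <;> by_cases hbv : b = v
    · exact hav.trans hbv.symm
    · exact absurd ⟨hbv, Or.inl hav⟩ hba
    · exact absurd ⟨hav, Or.inl hbv⟩ hab
    · exact hp.trichotomous a b (fun h => hab ⟨hav, Or.inr h⟩) (fun h => hba ⟨hbv, Or.inr h⟩)

theorem ite_moveLast_le {V : Type*} {p : V → V → Prop} {x y : V → ℝ} {v u w : V}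
    (hx0 : 0 ≤ x u) (hyx : u ≠ v → y u = x u) :
    (if moveLast p v u w then y u else 0) ≤ if w = v ∨ p u w then x u else 0 := by
  unfold moveLast
  split_ifs <;> grind

theorem greedyPacking_raise_one_vertex_general
    {V : Type*} [Fintype V]
    (G : SimpleGraph V) [DecidableRel G.Adj]
    (x : V → ℝ) (hx : IsGreedyPacking G x)
    (v : V)
    (y : V → ℝ) (hy0 : ∀ u : V, 0 ≤ y u)
    (hyx : ∀ u : V, u ≠ v → y u = x u)
    (hyv : y v ≤ x v + 1 - (x v + ∑ u ∈ G.neighborFinset v, x u)) :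
    IsGreedyPacking G y := by
  obtain ⟨hx0, p, hp, hpx⟩ := hx
  refine ⟨hy0, moveLast p v, isStrictTotalOrder_moveLast hp v, fun w => ?_⟩
  have hsum : ∑ u ∈ G.neighborFinset w, (if moveLast p v u w then y u else 0) ≤
      ∑ u ∈ G.neighborFinset w, (if w = v ∨ p u w then x u else 0) :=
    sum_le_sum fun u _ => ite_moveLast_le (hx0 u) (hyx u)
  by_cases hw : w = v
  · subst hw
    simp only [true_or, if_true] at hsum
    linarith
  · simp only [hw, false_or] at hsum
    linarith [hyx w hw, hpx w]

/-- If `x` is a greedy packing, `v` is a vertex with `Σ_x(v) ≤ 1`, and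
`y` is a nonnegative vector agreeing with `x` off `v` and with
`y v ≤ x v + 1 − Σ_x(v)`, then `y` is also a greedy packing. -/
theorem greedyPacking_raise_one_vertex
    {V : Type*} [Fintype V] [DecidableEq V]
    (G : SimpleGraph V) [DecidableRel G.Adj]
    (x : V → ℝ) (hx : IsGreedyPacking G x)
    (v : V) (hv : x v + ∑ u ∈ G.neighborFinset v, x u ≤ 1)
    (y : V → ℝ) (hy0 : ∀ u : V, 0 ≤ y u)
    (hyx : ∀ u : V, u ≠ v → y u = x u)
    (hyv : y v ≤ x v + 1 - (x v + ∑ u ∈ G.neighborFinset v, x u)) :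
    IsGreedyPacking G y :=
  greedyPacking_raise_one_vertex_general G x hx v y hy0 hyx hyv
end

section
/- Let G = (V, E) be a finite simple graph, let x be a greedy packing of G, let U ⊆ V, and let y : V → ℝ≥0 satisfy y_v = x_v for all v ∈ V \ U and y_u ≥ x_u for all u ∈ U. If Σ_y(u) ≤ 1 for all u ∈ U, then y is also a greedy packing of G. -/
open Finset
open Classical

/-! Put the vertices of `U` after all the others, keeping the order of `x` inside `U` and
inside its complement. A vertex of `U` then sees at most its closed neighbourhood, whose
`y`-weight is at most `1` by assumption; a vertex outside `U` sees only earlier neighbours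
outside `U`, where `y = x`, so the greedy bound for `x` applies. -/

section LexByKey

variable {α β : Type*}

def lexByKey [LT β] (f : α → β) (p : α → α → Prop) : α → α → Prop :=
  Function.onFun (Prod.Lex (· < ·) p) fun a => (f a, a)

theorem lexByKey_iff [LT β] {f : α → β} {p : α → α → Prop} {a b : α} :
    lexByKey f p a b ↔ f a < f b ∨ f a = f b ∧ p a b :=
  Prod.lex_def (p := (f a, a)) (q := (f b, b))

theorem isStrictTotalOrder_lexByKey [LinearOrder β] (f : α → β) (p : α → α → Prop)
    [IsStrictTotalOrder α p] :
    IsStrictTotalOrder α (lexByKey f p) :=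
  have : IsStrictTotalOrder (β × α) (Prod.Lex (· < ·) p) := {}
  Function.Injective.isStrictTotalOrder_onFun (Prod.Lex (· < ·) p) (f := fun a => (f a, a))
    fun _ _ h => congrArg Prod.snd h

theorem lexByKey.key_eq_of_isMin [Preorder β] {f : α → β} {p : α → α → Prop} {a b : α}
    (hb : IsMin (f b)) (hab : lexByKey f p a b) : f a = f b ∧ p a b :=
  (lexByKey_iff.mp hab).resolve_left hb.not_lt

end LexByKey

section SumIte

variable {ι M : Type*} [AddCommMonoid M] [PartialOrder M] [IsOrderedAddMonoid M]
  {s : Finset ι} {P Q : ι → Prop} [DecidablePred P] [DecidablePred Q] {f g : ι → M}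

theorem Finset.sum_ite_le_sum_ite (hg : ∀ i ∈ s, P i → 0 ≤ g i)
    (h : ∀ i ∈ s, Q i → P i ∧ f i ≤ g i) :
    ∑ i ∈ s, (if Q i then f i else 0) ≤ ∑ i ∈ s, (if P i then g i else 0) := by
  refine sum_le_sum fun i hi => ?_
  by_cases hQ : Q i
  · obtain ⟨hP, hfg⟩ := h i hi hQ
    simpa only [hQ, hP, if_true] using hfg
  · rw [if_neg hQ]
    split_ifs with hP
    exacts [hg i hi hP, le_rfl]

theorem Finset.sum_ite_le_sum (hf : ∀ i ∈ s, 0 ≤ f i) :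
    ∑ i ∈ s, (if Q i then f i else 0) ≤ ∑ i ∈ s, f i := by
  rw [← sum_filter]
  exact sum_le_sum_of_subset_of_nonneg (filter_subset _ _) fun i hi _ => hf i hi

end SumIte

theorem greedyPacking_raise_subset_general
    {V : Type*} [Fintype V]
    (G : SimpleGraph V) [DecidableRel G.Adj]
    (x : V → ℝ) (hx : IsGreedyPacking G x)
    (U : Finset V)
    (y : V → ℝ) (hy0 : ∀ u : V, 0 ≤ y u)
    (hyout : ∀ v : V, v ∉ U → y v = x v)
    (hU : ∀ u ∈ U, y u + ∑ w ∈ G.neighborFinset u, y w ≤ 1) :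
    IsGreedyPacking G y := by
  obtain ⟨hx0, p, hp, hxp⟩ := hx
  set key : V → Bool := fun v => decide (v ∈ U)
  refine ⟨hy0, lexByKey key p, isStrictTotalOrder_lexByKey key p, fun v => ?_⟩
  by_cases hv : v ∈ U
  · refine le_trans ?_ (hU v hv)
    exact add_le_add le_rfl (sum_ite_le_sum fun u _ => hy0 u)
  · have hkey_v : key v = false := decide_eq_false hv
    refine le_trans ?_ (hxp v)
    rw [hyout v hv]
    refine add_le_add le_rfl (sum_ite_le_sum_ite (fun u _ _ => hx0 u) fun u _ huv => ?_)
    obtain ⟨hkey, hpuv⟩ := lexByKey.key_eq_of_isMin (hkey_v ▸ isMin_bot) huv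
    exact ⟨hpuv, (hyout u (of_decide_eq_false (hkey.trans hkey_v))).le⟩

/-- If `x` is a greedy packing, `U ⊆ V`, and `y` is a nonnegative
vector agreeing with `x` outside `U`, dominating `x` on `U`, and with `Σ_y(u) ≤ 1` for
all `u ∈ U`, then `y` is also a greedy packing. -/
theorem greedyPacking_raise_subset
    {V : Type*} [Fintype V] [DecidableEq V]
    (G : SimpleGraph V) [DecidableRel G.Adj]
    (x : V → ℝ) (hx : IsGreedyPacking G x)
    (U : Finset V)
    (y : V → ℝ) (hy0 : ∀ u : V, 0 ≤ y u)
    (hyout : ∀ v : V, v ∉ U → y v = x v)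
    (hyin : ∀ u ∈ U, x u ≤ y u)
    (hU : ∀ u ∈ U, y u + ∑ w ∈ G.neighborFinset u, y w ≤ 1) :
    IsGreedyPacking G y :=
  greedyPacking_raise_subset_general G x hx U y hy0 hyout hU
end

section
/- Let G = (V, E) be a finite simple graph of neighborhood independence at most r (r ≥ 1), and let x and y be two greedy packings of G. Let U ⊆ V be the set of vertices v with Σ_y(v) ≥ 1/2. Then Σ_{v ∈ V} y_v ≥ (1/(2r)) · Σ_{v ∈ U} x_v. -/
open Finset
open Classical

/-!
A greedy packing puts total weight at most `1` on the closed neighborhood of a vertex `z`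
within any set `S` of which `z` is the last element. Peeling off the last elements one at a
time therefore bounds the weight of any `S` by the size of an independent subset of `S`; in a
closed neighborhood that size is at most `r`, so every closed neighborhood carries `x`-weight at
most `r`. Double counting `∑_v x_v Σ_y(v) = ∑_u y_u Σ_x(u)` then gives the claim, since
`x_v ≤ 2 x_v Σ_y(v)` on `U`.
-/

theorem Finset.exists_forall_rel_of_isStrictTotalOrder {α : Type*} [Finite α]
    {p : α → α → Prop} [IsStrictTotalOrder α p] {S : Finset α} (hS : S.Nonempty) :
    ∃ z ∈ S, ∀ w ∈ S, w ≠ z → p w z := by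
  obtain ⟨z, hzS, hz⟩ :=
    (Finite.wellFounded_of_trans_of_irrefl (Function.swap p)).has_min (S : Set α) hS
  exact ⟨z, hzS, fun w hw hwz => (trichotomous_of p w z).resolve_right
    (by rintro (rfl | hzw); exacts [hwz rfl, hz w hw hzw])⟩

namespace SimpleGraph

def NeighborhoodIndepAtMost {V : Type*} (G : SimpleGraph V) (r : ℕ) : Prop :=
  ∀ v : V, ∀ S : Finset V, (∀ u ∈ S, G.Adj v u) → G.IsIndepSet S → #S ≤ r

variable {V : Type*} [Fintype V] [DecidableEq V] (G : SimpleGraph V) [DecidableRel G.Adj]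

def closedNeighborFinset (v : V) : Finset V := insert v (G.neighborFinset v)

variable {G}

theorem mem_closedNeighborFinset {v w : V} :
    w ∈ G.closedNeighborFinset v ↔ w = v ∨ G.Adj v w := by
  simp [closedNeighborFinset]

theorem mem_closedNeighborFinset_comm {v w : V} :
    w ∈ G.closedNeighborFinset v ↔ v ∈ G.closedNeighborFinset w := by
  simp only [mem_closedNeighborFinset, eq_comm, G.adj_comm]

theorem sum_closedNeighborFinset {M : Type*} [AddCommMonoid M] (f : V → M) (v : V) :
    ∑ u ∈ G.closedNeighborFinset v, f u = f v + ∑ u ∈ G.neighborFinset v, f u :=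
  sum_insert (G.notMem_neighborFinset_self v)

theorem sum_mul_sum_closedNeighborFinset_comm {R : Type*} [CommSemiring R] (x y : V → R) :
    ∑ v, x v * ∑ u ∈ G.closedNeighborFinset v, y u =
      ∑ u, y u * ∑ v ∈ G.closedNeighborFinset u, x v := by
  simp_rw [mul_sum]
  rw [sum_comm' (t' := univ) (s' := G.closedNeighborFinset) fun v u => by
    simp only [mem_univ, true_and, and_true, mem_closedNeighborFinset_comm]]
  simp_rw [mul_comm]

theorem card_le_of_isIndepSet_of_subset_closedNeighborFinset {r : ℕ} (hr : 1 ≤ r)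
    (hni : G.NeighborhoodIndepAtMost r) {u : V} {I : Finset V} (hI : G.IsIndepSet I) (hIu : I ⊆ G.closedNeighborFinset u) :
    #I ≤ r := by
  by_cases hu : u ∈ I
  · have : I = {u} := eq_singleton_iff_unique_mem.2 ⟨hu, fun w hw => by
      by_contra hwu
      exact (mem_closedNeighborFinset.1 (hIu hw)).elim hwu (hI hu hw (Ne.symm hwu))⟩
    simpa [this] using hr
  · refine hni u I (fun w hw => ?_) hI
    exact (mem_closedNeighborFinset.1 (hIu hw)).resolve_left (by rintro rfl; exact hu hw)

end SimpleGraph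

open SimpleGraph

section GreedyPacking

variable {V : Type*} [Fintype V] [DecidableEq V] {G : SimpleGraph V} [DecidableRel G.Adj]
  {x : V → ℝ}

theorem sum_le_one_of_forall_eq_or_adj_rel {p : V → V → Prop} (hx0 : ∀ v, 0 ≤ x v)
    (hpack : ∀ v : V, x v + ∑ u ∈ G.neighborFinset v, (if p u v then x u else 0) ≤ 1)
    {z : V} {A : Finset V} (hA : ∀ w ∈ A, w = z ∨ G.Adj z w ∧ p w z) :
    ∑ w ∈ A, x w ≤ 1 := by
  have hsub : A ⊆ insert z ((G.neighborFinset z).filter (p · z)) := fun w hw => by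
    rcases hA w hw with rfl | ⟨hzw, hwz⟩
    · exact mem_insert_self _ _
    · exact mem_insert_of_mem (mem_filter.2 ⟨(G.mem_neighborFinset z w).2 hzw, hwz⟩)
  calc ∑ w ∈ A, x w ≤ ∑ w ∈ insert z ((G.neighborFinset z).filter (p · z)), x w :=
        sum_le_sum_of_subset_of_nonneg hsub fun w _ _ => hx0 w
    _ = x z + ∑ u ∈ G.neighborFinset z, (if p u z then x u else 0) := by
        rw [sum_insert fun h => G.notMem_neighborFinset_self z (mem_filter.1 h).1, sum_filter]
    _ ≤ 1 := hpack z

theorem IsGreedyPacking.exists_isIndepSet_subset_sum_le_card (hx : IsGreedyPacking G x)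
    (S : Finset V) : ∃ I ⊆ S, G.IsIndepSet I ∧ ∑ w ∈ S, x w ≤ #I := by
  obtain ⟨hx0, p, hp, hpack⟩ := hx
  induction S using Finset.strongInduction with
  | H S ih =>
  rcases S.eq_empty_or_nonempty with rfl | hS
  · exact ⟨∅, subset_refl _, by simp, by simp⟩
  obtain ⟨z, hzS, hz⟩ := S.exists_forall_rel_of_isStrictTotalOrder (p := p) hS
  set T := S.filter fun w => ¬ (w = z ∨ G.Adj z w)
  have hTS : T ⊂ S := (filter_subset _ S).ssubset_of_mem_notMem hzS (by simp)
  obtain ⟨I, hIT, hI, hTI⟩ := ih T hTS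
  have hzI : ∀ w ∈ I, ¬ (w = z ∨ G.Adj z w) := fun w hw => (mem_filter.1 (hIT hw)).2
  have hnear : ∑ w ∈ S.filter (fun w => w = z ∨ G.Adj z w), x w ≤ 1 :=
    sum_le_one_of_forall_eq_or_adj_rel hx0 hpack fun w hw => by
      obtain ⟨hwS, hw | hw⟩ := mem_filter.1 hw
      · exact .inl hw
      · exact .inr ⟨hw, hz w hwS (G.ne_of_adj hw).symm⟩
  refine ⟨insert z I, insert_subset hzS (hIT.trans (filter_subset _ _)), ?_, ?_⟩
  · rw [coe_insert, isIndepSet_iff, Set.pairwise_insert]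
    exact ⟨hI, fun w hw _ => ⟨fun hzw => hzI w hw (.inr hzw),
      fun hwz => hzI w hw (.inr hwz.symm)⟩⟩
  · rw [← sum_filter_add_sum_filter_not S fun w => w = z ∨ G.Adj z w,
      card_insert_of_notMem fun h => hzI z h (.inl rfl)]
    push_cast
    linarith

theorem IsGreedyPacking.sum_closedNeighborFinset_le (hx : IsGreedyPacking G x) {r : ℕ}
    (hr : 1 ≤ r) (hni : G.NeighborhoodIndepAtMost r) (u : V) :
    ∑ v ∈ G.closedNeighborFinset u, x v ≤ r := by
  obtain ⟨I, hIu, hI, hsum⟩ := hx.exists_isIndepSet_subset_sum_le_card (G.closedNeighborFinset u)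
  exact hsum.trans <| Nat.cast_le.2 <|
    card_le_of_isIndepSet_of_subset_closedNeighborFinset hr hni hI hIu

end GreedyPacking

theorem greedyPacking_compare_general
    {V : Type*} [Fintype V]
    (G : SimpleGraph V) [DecidableRel G.Adj]
    (r : ℕ) (hr : 1 ≤ r)
    (hni : ∀ v : V, ∀ S : Finset V, (∀ u ∈ S, G.Adj v u) →
      (∀ u ∈ S, ∀ w ∈ S, u ≠ w → ¬ G.Adj u w) → S.card ≤ r)
    (x y : V → ℝ) (hx : IsGreedyPacking G x) (hy : IsGreedyPacking G y) :
    (1 / (2 * (r : ℝ))) *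
        ∑ v ∈ Finset.univ.filter
          (fun v => (1 : ℝ) / 2 ≤ y v + ∑ u ∈ G.neighborFinset v, y u), x v
      ≤ ∑ v : V, y v := by
  have hU : ∑ v ∈ univ.filter (fun v => (1 : ℝ) / 2 ≤ y v + ∑ u ∈ G.neighborFinset v, y u), x v
      ≤ 2 * ∑ v, x v * ∑ u ∈ G.closedNeighborFinset v, y u := by
    rw [mul_sum, sum_filter]
    refine sum_le_sum fun v _ => ?_
    have hyv : 0 ≤ ∑ u ∈ G.closedNeighborFinset v, y u := sum_nonneg fun u _ => hy.1 u
    rw [sum_closedNeighborFinset] at hyv ⊢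
    split_ifs with hv
    · nlinarith [hx.1 v]
    · exact mul_nonneg zero_le_two (mul_nonneg (hx.1 v) hyv)
  have hdouble : ∑ v, x v * ∑ u ∈ G.closedNeighborFinset v, y u ≤ r * ∑ u, y u := by
    rw [sum_mul_sum_closedNeighborFinset_comm, mul_sum]
    exact sum_le_sum fun u _ => by
      rw [mul_comm]
      exact mul_le_mul_of_nonneg_right (hx.sum_closedNeighborFinset_le hr hni u) (hy.1 u)
  rw [one_div, inv_mul_le_iff₀ (by positivity)]
  linarith

/-- In a finite simple graph of neighborhood independence at most `r`,
if `x` and `y` are greedy packings and `U` is the set of vertices `v` with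
`Σ_y(v) ≥ 1/2`, then `Σ_{v} y_v ≥ (1/(2r)) · Σ_{v ∈ U} x_v`. -/
theorem greedyPacking_compare
    {V : Type*} [Fintype V] [DecidableEq V]
    (G : SimpleGraph V) [DecidableRel G.Adj]
    (r : ℕ) (hr : 1 ≤ r)
    (hni : ∀ v : V, ∀ S : Finset V, (∀ u ∈ S, G.Adj v u) →
      (∀ u ∈ S, ∀ w ∈ S, u ≠ w → ¬ G.Adj u w) → S.card ≤ r)
    (x y : V → ℝ) (hx : IsGreedyPacking G x) (hy : IsGreedyPacking G y) :
    (1 / (2 * (r : ℝ))) *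
        ∑ v ∈ Finset.univ.filter
          (fun v => (1 : ℝ) / 2 ≤ y v + ∑ u ∈ G.neighborFinset v, y u), x v
      ≤ ∑ v : V, y v :=
  greedyPacking_compare_general G r hr hni x y hx hy
end

section
/- Let G = (V, E) be a finite simple graph of maximum degree at most Δ (Δ ≥ 1). Then there exists a greedy packing x of G such that x_v ≥ 1/(Δ+1) for every vertex v ∈ V and Σ_x(v) ≥ 1/2 for every vertex v ∈ V. -/
/-!
Let `L` be the set of vertices of degree at most `Δ / 2 - 1` and `H` a maximal independent subset
of `L`. Put weight `1/2` on `H` and `1/(Δ+1)` elsewhere, and order the vertices so that `H` comes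
last. As `H` is independent and comes last, every vertex only sees predecessors of weight
`1/(Δ+1)`, which keeps the greedy constraints, and the low degree of the vertices in `H` pays for
their weight `1/2`. A vertex in `H` or next to `H` is saturated by that weight `1/2`; any other
vertex lies outside `L` by maximality, and then its `deg v + 1 ≥ (Δ + 1) / 2` weights `1/(Δ+1)`
add up to `1/2`.
-/

open Finset
open Classical

theorem exists_isStrictTotalOrder_mem_of_rel_of_mem {α : Type*} (s : Set α) :
    ∃ r : α → α → Prop, IsStrictTotalOrder α r ∧ ∀ u v, r u v → u ∈ s → v ∈ s := by
  let : LinearOrder α := linearOrderOfSTO WellOrderingRel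
  let f : α → Bool ×ₗ α := fun a => toLex (decide (a ∈ s), a)
  have hf : f.Injective := fun a b h => congrArg (fun p => (ofLex p).2) h
  refine ⟨Function.onFun (· < ·) f, hf.isStrictTotalOrder_onFun (· < ·), fun u v huv hu => ?_⟩
  rcases Prod.Lex.lt_iff.mp huv with h | ⟨h, -⟩
  · simp only [f, hu, decide_true] at h
    exact absurd h (not_lt.mpr le_top)
  · simpa [f, hu] using h.symm

theorem SimpleGraph.exists_adj_of_maximal_isIndepSet {V : Type*} (G : SimpleGraph V)
    {L H : Set V} (hH : Maximal (fun s => s ⊆ L ∧ G.IsIndepSet s) H) {v : V} (hvL : v ∈ L)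
    (hvH : v ∉ H) : ∃ w ∈ H, G.Adj v w := by
  by_contra! hv
  have hins : insert v H ⊆ L ∧ G.IsIndepSet (insert v H) :=
    ⟨Set.insert_subset hvL hH.prop.1,
      hH.prop.2.insert fun w hw _ => ⟨hv w hw, fun h => hv w hw h.symm⟩⟩
  exact hvH (hH.2 hins (Set.subset_insert v H) (Set.mem_insert v H))

section TwoLevelWeight

variable {V : Type*} {H : Set V} {Δ : ℕ}

noncomputable def twoLevelWeight (H : Set V) (Δ : ℕ) (v : V) : ℝ :=
  if v ∈ H then 1 / 2 else 1 / (Δ + 1)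

theorem twoLevelWeight_of_mem {v : V} (hv : v ∈ H) : twoLevelWeight H Δ v = 1 / 2 := if_pos hv

theorem twoLevelWeight_of_notMem {v : V} (hv : v ∉ H) : twoLevelWeight H Δ v = 1 / (Δ + 1) :=
  if_neg hv

theorem twoLevelWeight_nonneg (v : V) : 0 ≤ twoLevelWeight H Δ v := by
  unfold twoLevelWeight; split_ifs <;> positivity

theorem one_div_le_twoLevelWeight (hΔ : ∀ v ∈ H, 1 ≤ Δ) (v : V) :
    1 / ((Δ : ℝ) + 1) ≤ twoLevelWeight H Δ v := by
  by_cases hv : v ∈ H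
  · have : (1 : ℝ) ≤ Δ := by exact_mod_cast hΔ v hv
    rw [twoLevelWeight_of_mem hv]
    gcongr; linarith
  · rw [twoLevelWeight_of_notMem hv]

variable [Fintype V] {G : SimpleGraph V} [DecidableRel G.Adj]

theorem isGreedyPacking_twoLevelWeight (hdeg : ∀ v, G.degree v ≤ Δ) (hH : G.IsIndepSet H)
    (hlow : ∀ v ∈ H, 2 * G.degree v ≤ Δ + 1) :
    IsGreedyPacking G (twoLevelWeight H Δ) := by
  obtain ⟨r, hr, hlast⟩ := exists_isStrictTotalOrder_mem_of_rel_of_mem H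
  refine ⟨twoLevelWeight_nonneg, r, hr, fun v => ?_⟩
  have hpred : ∀ u ∈ G.neighborFinset v, r u v → u ∉ H := fun u hu hr hu' =>
    have hvu := ((G.mem_neighborFinset v u).mp hu).symm
    hH hu' (hlast u v hr hu') hvu.ne hvu
  have hsum : ∑ u ∈ G.neighborFinset v, (if r u v then twoLevelWeight H Δ u else 0)
      ≤ G.degree v / ((Δ : ℝ) + 1) := by
    rw [← G.card_neighborFinset_eq_degree, div_eq_mul_one_div, ← nsmul_eq_mul]
    refine Finset.sum_le_card_nsmul _ _ _ fun u hu => ?_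
    split_ifs with hr
    · rw [twoLevelWeight_of_notMem (hpred u hu hr)]
    · positivity
  have hΔ : (0 : ℝ) < Δ + 1 := by positivity
  by_cases hv : v ∈ H
  · have : 2 * (G.degree v : ℝ) ≤ Δ + 1 := by exact_mod_cast hlow v hv
    have : G.degree v / ((Δ : ℝ) + 1) ≤ 1 / 2 := by
      rw [div_le_iff₀ hΔ]; linarith
    rw [twoLevelWeight_of_mem hv]; linarith
  · have : (G.degree v : ℝ) ≤ Δ := by exact_mod_cast hdeg v
    have : 1 / ((Δ : ℝ) + 1) + G.degree v / ((Δ : ℝ) + 1) ≤ 1 := by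
      rw [← add_div, div_le_one hΔ]; linarith
    rw [twoLevelWeight_of_notMem hv]; linarith

theorem one_half_le_twoLevelWeight_add_sum
    (hdom : ∀ v ∉ H, (∀ w ∈ H, ¬ G.Adj v w) → Δ ≤ 2 * G.degree v + 1) (v : V) :
    1 / 2 ≤ twoLevelWeight H Δ v + ∑ u ∈ G.neighborFinset v, twoLevelWeight H Δ u := by
  have hsum_nonneg : 0 ≤ ∑ u ∈ G.neighborFinset v, twoLevelWeight H Δ u :=
    Finset.sum_nonneg fun u _ => twoLevelWeight_nonneg u
  by_cases hv : v ∈ H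
  · rw [twoLevelWeight_of_mem hv]; linarith
  by_cases hnb : ∃ w ∈ H, G.Adj v w
  · obtain ⟨w, hw, hvw⟩ := hnb
    have := Finset.single_le_sum (f := twoLevelWeight H Δ) (fun u _ => twoLevelWeight_nonneg u)
      ((G.mem_neighborFinset v w).mpr hvw)
    rw [twoLevelWeight_of_mem hw] at this
    linarith [twoLevelWeight_nonneg (H := H) (Δ := Δ) v]
  push Not at hnb
  have hΔ : (Δ : ℝ) ≤ 2 * G.degree v + 1 := by exact_mod_cast hdom v hv hnb
  have hnbH : ∀ u ∈ G.neighborFinset v, twoLevelWeight H Δ u = 1 / (Δ + 1) := fun u hu =>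
    twoLevelWeight_of_notMem fun h => hnb u h ((G.mem_neighborFinset v u).mp hu)
  rw [Finset.sum_congr rfl hnbH, Finset.sum_const, G.card_neighborFinset_eq_degree, nsmul_eq_mul,
    twoLevelWeight_of_notMem hv, mul_one_div, ← add_div, le_div_iff₀ (by positivity)]
  linarith

end TwoLevelWeight

theorem exists_saturated_greedyPacking_general
    {V : Type*} [Fintype V]
    (G : SimpleGraph V) [DecidableRel G.Adj]
    (Δ : ℕ)
    (hdeg : ∀ v : V, G.degree v ≤ Δ) :
    ∃ x : V → ℝ,
      IsGreedyPacking G x ∧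
      (∀ v : V, 1 / ((Δ : ℝ) + 1) ≤ x v) ∧
      (∀ v : V, (1 : ℝ) / 2 ≤ x v + ∑ u ∈ G.neighborFinset v, x u) := by
  let L : Set V := {v | 2 * G.degree v + 2 ≤ Δ}
  obtain ⟨H, -, hH⟩ := Finite.exists_le_maximal (p := fun s => s ⊆ L ∧ G.IsIndepSet s)
    (a := ∅) ⟨Set.empty_subset L, Set.pairwise_empty _⟩
  have hlow : ∀ v ∈ H, 2 * G.degree v + 2 ≤ Δ := fun v hv => hH.prop.1 hv
  refine ⟨twoLevelWeight H Δ,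
    isGreedyPacking_twoLevelWeight hdeg hH.prop.2 fun v hv => by linarith [hlow v hv],
    one_div_le_twoLevelWeight fun v hv => by linarith [hlow v hv],
    one_half_le_twoLevelWeight_add_sum fun v hvH hv => ?_⟩
  by_contra! hvL
  obtain ⟨w, hw, hvw⟩ :=
    G.exists_adj_of_maximal_isIndepSet hH (show 2 * G.degree v + 2 ≤ Δ by omega) hvH
  exact hv w hw hvw

/-- In a finite simple graph of maximum degree at most `Δ ≥ 1`, there
exists a greedy packing `x` with `x v ≥ 1/(Δ+1)` and `Σ_x(v) ≥ 1/2` for every vertex. -/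
theorem exists_saturated_greedyPacking
    {V : Type*} [Fintype V] [DecidableEq V]
    (G : SimpleGraph V) [DecidableRel G.Adj]
    (Δ : ℕ) (hΔ : 1 ≤ Δ)
    (hdeg : ∀ v : V, G.degree v ≤ Δ) :
    ∃ x : V → ℝ,
      IsGreedyPacking G x ∧
      (∀ v : V, 1 / ((Δ : ℝ) + 1) ≤ x v) ∧
      (∀ v : V, (1 : ℝ) / 2 ≤ x v + ∑ u ∈ G.neighborFinset v, x u) :=
  exists_saturated_greedyPacking_general G Δ hdeg
end

section
/- Let r ≥ 2 and Δ ≥ 2 be integers and let α ≥ 1 and c > 0 be reals with αr ≥ 2. For a real x ≥ 1, let t_x = min{t ∈ ℕ₀ : (x/2)^(2^(−t)) ≤ 2}. Let R : [1, ∞) → ℝ be any function satisfying R(L) ≤ c·r² + c·log₂ Δ for all 1 ≤ L ≤ 4, and R(L) ≤ αr · R(√(2L)) + c·r for all L > 4. Then for every L ≥ 1, R(L) ≤ (αr)^(t_L) · (c·r² + c·log₂ Δ) + c·r · Σ_{i=0}^{t_L − 1} (αr)^i, and in particular R(L) < 2·(αr)^(t_L) · (c·r² + c·log₂ Δ). 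-/
open Finset Real

/-!
The map `L ↦ √(2L)` takes the square root of `L / 2`: `√(2L) / 2 = √(L / 2)`. Hence the defining condition
of `t_L`, which reads `L / 2 ≤ 2 ^ 2 ^ t`, shows that `t_L = t_{√(2L)} + 1` for `L > 4` and
`t_L = 0` for `L ≤ 4`. Unrolling the recurrence `t_L` times gives the first bound, and the
geometric sum is at most `(αr)^(t_L) - 1` because `αr ≥ 2`, while `c·r < c·r² + c·log₂ Δ`.
-/

lemma rpow_inv_two_pow_le_two_iff {y : ℝ} (hy : 0 ≤ y) (s : ℕ) :
    y ^ ((2 : ℝ) ^ s)⁻¹ ≤ 2 ↔ y ≤ 2 ^ 2 ^ s := by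
  rw [rpow_inv_le_iff_of_pos hy zero_le_two (by positivity), ← Nat.cast_ofNat,
    ← Nat.cast_pow, rpow_natCast]

/-- The paper's `t_x`: the number of steps `x ↦ √(2x)` needed to bring `x ≥ 1` into `[1, 4]`. -/
noncomputable def recursionDepth (x : ℝ) : ℕ :=
  sInf {s : ℕ | (x / 2) ^ (((2 : ℝ) ^ s)⁻¹) ≤ 2}

lemma zero_mem_setOf_rpow_le_two {x : ℝ} (hx : x ≤ 4) :
    0 ∈ {s : ℕ | (x / 2) ^ (((2 : ℝ) ^ s)⁻¹) ≤ 2} := by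
  simp only [Set.mem_ofPred_eq, pow_zero, inv_one, rpow_one]
  linarith

lemma recursionDepth_eq_zero {x : ℝ} (hx : x ≤ 4) : recursionDepth x = 0 :=
  Nat.sInf_eq_zero.mpr (Or.inl (zero_mem_setOf_rpow_le_two hx))

lemma setOf_rpow_le_two_nonempty {x : ℝ} (hx : 0 ≤ x) :
    {s : ℕ | (x / 2) ^ (((2 : ℝ) ^ s)⁻¹) ≤ 2}.Nonempty := by
  obtain ⟨s, hs⟩ := pow_unbounded_of_one_lt (x / 2) one_lt_two
  refine ⟨s, (rpow_inv_two_pow_le_two_iff (by positivity) s).mpr ?_⟩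
  calc x / 2 ≤ 2 ^ s := hs.le
    _ ≤ 2 ^ 2 ^ s := pow_le_pow_right₀ one_le_two Nat.lt_two_pow_self.le

lemma sqrt_two_mul_div_two (x : ℝ) : √(2 * x) / 2 = √(x / 2) := by
  rw [show 2 * x = x / 2 * 2 ^ 2 by ring, sqrt_mul' _ (by positivity), sqrt_sq zero_le_two,
    mul_div_cancel_right₀ _ two_ne_zero]

lemma recursionDepth_sqrt_two_mul {x : ℝ} (hx : 4 < x) :
    recursionDepth x = recursionDepth √(2 * x) + 1 := by
  have hstep : ∀ s : ℕ, (x / 2) ^ (((2 : ℝ) ^ (s + 1))⁻¹) ≤ 2 ↔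
      (√(2 * x) / 2) ^ (((2 : ℝ) ^ s)⁻¹) ≤ 2 := fun s ↦ by
    rw [rpow_inv_two_pow_le_two_iff (by positivity), sqrt_two_mul_div_two,
      rpow_inv_two_pow_le_two_iff (by positivity), sqrt_le_left (by positivity), pow_succ,
      pow_mul]
  have hpos : 1 ≤ recursionDepth x := by
    refine Nat.one_le_iff_ne_zero.mpr fun h ↦ ?_
    rcases Nat.sInf_eq_zero.mp h with h0 | hempty
    · simp only [Set.mem_ofPred_eq, pow_zero, inv_one, rpow_one] at h0
      linarith
    · exact (setOf_rpow_le_two_nonempty (by linarith)).ne_empty hempty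
  rw [recursionDepth, ← Nat.sInf_add hpos]
  simp only [hstep]
  rfl

theorem le_of_recursionDepth {R : ℝ → ℝ} {q B b : ℝ} (hq : 0 ≤ q)
    (hbase : ∀ L : ℝ, 1 ≤ L → L ≤ 4 → R L ≤ B)
    (hrec : ∀ L : ℝ, 4 < L → R L ≤ q * R √(2 * L) + b) (L : ℝ) (hL : 1 ≤ L) :
    R L ≤ q ^ recursionDepth L * B + b * ∑ i ∈ range (recursionDepth L), q ^ i := by
  induction hn : recursionDepth L generalizing L with
  | zero =>
    rcases le_or_gt L 4 with h4 | h4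
    · simpa using hbase L hL h4
    · simp [recursionDepth_sqrt_two_mul h4] at hn
  | succ n ih =>
    have h4 : 4 < L := by
      by_contra! h4
      simp [recursionDepth_eq_zero h4] at hn
    have hL' : 1 ≤ √(2 * L) := one_le_sqrt.mpr (by linarith)
    have hR' := ih √(2 * L) hL' (by rw [recursionDepth_sqrt_two_mul h4] at hn; omega)
    calc R L ≤ q * R √(2 * L) + b := hrec L h4
      _ ≤ q * (q ^ n * B + b * ∑ i ∈ range n, q ^ i) + b := by gcongr
      _ = q ^ (n + 1) * B + b * ∑ i ∈ range (n + 1), q ^ i := by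
        rw [geom_sum_succ]; ring

lemma geom_sum_le_pow_sub_one {q : ℝ} (hq : 2 ≤ q) (n : ℕ) :
    ∑ i ∈ range n, q ^ i ≤ q ^ n - 1 := by
  have hsum : 0 ≤ ∑ i ∈ range n, q ^ i := sum_nonneg fun i _ ↦ by positivity
  rw [← geom_sum_mul]
  nlinarith

lemma pow_mul_add_mul_geom_sum_lt {q B b : ℝ} (hq : 2 ≤ q) (hb : 0 ≤ b) (hbB : b < B) (n : ℕ) :
    q ^ n * B + b * ∑ i ∈ range n, q ^ i < 2 * q ^ n * B := by
  have hqn : 1 ≤ q ^ n := one_le_pow₀ (by linarith)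
  calc q ^ n * B + b * ∑ i ∈ range n, q ^ i ≤ q ^ n * B + b * (q ^ n - 1) := by
        gcongr; exact geom_sum_le_pow_sub_one hq n
    _ ≤ q ^ n * B + B * (q ^ n - 1) := by gcongr
    _ < 2 * q ^ n * B := by nlinarith

theorem recurrence_solution_general
    (r Δ : ℕ) (hr : 2 ≤ r) (hΔ : 2 ≤ Δ)
    (α c : ℝ) (hc : 0 < c) (hαr : 2 ≤ α * r)
    (t : ℝ → ℕ)
    (ht : ∀ x : ℝ, 1 ≤ x →
      t x = sInf {s : ℕ | (x / 2) ^ (((2 : ℝ) ^ s)⁻¹) ≤ 2})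
    (R : ℝ → ℝ)
    (hbase : ∀ L : ℝ, 1 ≤ L → L ≤ 4 → R L ≤ c * r ^ 2 + c * Real.logb 2 Δ)
    (hrec : ∀ L : ℝ, 4 < L → R L ≤ α * r * R (Real.sqrt (2 * L)) + c * r) :
    ∀ L : ℝ, 1 ≤ L →
      R L ≤ (α * r) ^ (t L) * (c * r ^ 2 + c * Real.logb 2 Δ) +
          c * r * ∑ i ∈ Finset.range (t L), (α * r) ^ i ∧
      R L < 2 * (α * r) ^ (t L) * (c * r ^ 2 + c * Real.logb 2 Δ) := by
  intro L hL
  have hrr : (r : ℝ) ≤ r ^ 2 := by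
    nlinarith [show (1 : ℝ) ≤ r by exact_mod_cast one_le_two.trans hr]
  have hlog : 0 < logb 2 Δ := logb_pos one_lt_two (by exact_mod_cast hΔ)
  have hcr : c * r < c * r ^ 2 + c * logb 2 Δ := by nlinarith
  have hbound := le_of_recursionDepth (by linarith) hbase hrec L hL
  have htL : t L = recursionDepth L := ht L hL
  rw [htL]
  exact ⟨hbound, hbound.trans_lt (pow_mul_add_mul_geom_sum_lt hαr (by positivity) hcr _)⟩

/-- Solution of the recurrence relation: let `r, Δ ≥ 2` be integers,
`α ≥ 1`, `c > 0` reals with `αr ≥ 2`, and for `x ≥ 1` let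
`t_x = min {t ∈ ℕ : (x/2)^(2^(−t)) ≤ 2}`. If `R : ℝ → ℝ` satisfies
`R(L) ≤ c·r² + c·log₂ Δ` for `1 ≤ L ≤ 4` and `R(L) ≤ αr·R(√(2L)) + c·r` for `L > 4`,
then for every `L ≥ 1`,
`R(L) ≤ (αr)^(t_L)·(c·r² + c·log₂ Δ) + c·r·Σ_{i<t_L} (αr)^i < 2(αr)^(t_L)·(c·r² + c·log₂ Δ)`. -/
theorem recurrence_solution
    (r Δ : ℕ) (hr : 2 ≤ r) (hΔ : 2 ≤ Δ)
    (α c : ℝ) (hα : 1 ≤ α) (hc : 0 < c) (hαr : 2 ≤ α * r)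
    (t : ℝ → ℕ)
    (ht : ∀ x : ℝ, 1 ≤ x →
      t x = sInf {s : ℕ | (x / 2) ^ (((2 : ℝ) ^ s)⁻¹) ≤ 2})
    (R : ℝ → ℝ)
    (hbase : ∀ L : ℝ, 1 ≤ L → L ≤ 4 → R L ≤ c * r ^ 2 + c * Real.logb 2 Δ)
    (hrec : ∀ L : ℝ, 4 < L → R L ≤ α * r * R (Real.sqrt (2 * L)) + c * r) :
    ∀ L : ℝ, 1 ≤ L →
      R L ≤ (α * r) ^ (t L) * (c * r ^ 2 + c * Real.logb 2 Δ) +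
          c * r * ∑ i ∈ Finset.range (t L), (α * r) ^ i ∧
      R L < 2 * (α * r) ^ (t L) * (c * r ^ 2 + c * Real.logb 2 Δ) :=
  recurrence_solution_general r Δ hr hΔ α c hc hαr t ht R hbase hrec
end
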